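/- Let 𝔤 be a finite-dimensional real Lie algebra with an inner product G and define R_G = −(1/4)|[·,·]|²_G. Then for any symmetric bilinear form S on 𝔤, the directional derivative of G ↦ R_G at G in direction S equals −⟨Ric_G, S⟩_G, where Ric_G(x,y) = −(1/2)Σ_i G([x,e_i],[y,e_i]) + (1/4)Σ_{i,j} G([e_i,e_j],x)G([e_i,e_j],y). -/

import Mathlib

open Matrix

namespace RFN

variable {n : ℕ}

/-- Bracket determined by structure constants: `[e i, e j] = ∑ k, c i j k • e k`. -/
def bra (c : Fin n → Fin n → Fin n → ℝ) (x y : Fin n → ℝ) : Fin n → ℝ :=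
  fun k => ∑ i, ∑ j, x i * y j * c i j k

/-- `c` is a family of structure constants of a Lie algebra. -/
def IsLieSC (c : Fin n → Fin n → Fin n → ℝ) : Prop :=
  (∀ i j k, c i j k = - c j i k) ∧
  ∀ x y z, bra c (bra c x y) z + bra c (bra c y z) x + bra c (bra c z x) y = 0

def adIter (c : Fin n → Fin n → Fin n → ℝ) (v : ℕ → Fin n → ℝ) :
    ℕ → (Fin n → ℝ) → (Fin n → ℝ)
  | 0, x => x
  | m + 1, x => bra c (v m) (adIter c v m x)

/-- Nilpotency of the Lie algebra with structure constants `c`. -/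
def IsNilpotentSC (c : Fin n → Fin n → Fin n → ℝ) : Prop :=
  ∃ N : ℕ, ∀ v x, adIter c v N x = 0

/-- Inner product of vectors with respect to the metric matrix `G`. -/
def gdot (G : Matrix (Fin n) (Fin n) ℝ) (x y : Fin n → ℝ) : ℝ :=
  ∑ i, ∑ j, x i * G i j * y j

/-- Components of the Ricci bilinear form of the invariant metric `G`:
`Ric_G(x,y) = -(1/2) Σ G([x,e_i],[y,e_j])G^{ij} + (1/4) Σ G^{ip}G^{jq}G([e_i,e_j],x)G([e_p,e_q],y)`. -/
noncomputable def Ricm (c : Fin n → Fin n → Fin n → ℝ) (G : Matrix (Fin n) (Fin n) ℝ) :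
    Matrix (Fin n) (Fin n) ℝ :=
  Matrix.of fun a b =>
    -(1/2) * (∑ i, ∑ j, G⁻¹ i j * gdot G (c a i) (c b j))
    + (1/4) * (∑ i, ∑ j, ∑ p, ∑ q, G⁻¹ i p * G⁻¹ j q *
        (∑ k, c i j k * G k a) * (∑ l, c p q l * G l b))

/-- Scalar curvature `R_G = -(1/4)|[·,·]|²_G`. -/
noncomputable def scalR (c : Fin n → Fin n → Fin n → ℝ) (G : Matrix (Fin n) (Fin n) ℝ) : ℝ :=
  -(1/4) * (∑ i, ∑ j, ∑ p, ∑ q, G⁻¹ i p * G⁻¹ j q * gdot G (c i j) (c p q))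

/-- Ricci endomorphism `Rc_G = G⁻¹ Ric_G`. -/
noncomputable def Rc (c : Fin n → Fin n → Fin n → ℝ) (G : Matrix (Fin n) (Fin n) ℝ) :
    Matrix (Fin n) (Fin n) ℝ := G⁻¹ * Ricm c G

/-- `δ(A)(e_i,e_j) = A[e_i,e_j] - [A e_i, e_j] - [e_i, A e_j]` (components). -/
def deltaE (c : Fin n → Fin n → Fin n → ℝ) (A : Matrix (Fin n) (Fin n) ℝ) :
    Fin n → Fin n → Fin n → ℝ :=
  fun i j k => (∑ l, A k l * c i j l) - (∑ l, A l i * c l j k) - (∑ l, A l j * c i l k)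

/-- The inner product on `Λ²𝔤*⊗𝔤` induced by `G` (full sum over ordered pairs). -/
noncomputable def tinner (G : Matrix (Fin n) (Fin n) ℝ) (μ ν : Fin n → Fin n → Fin n → ℝ) : ℝ :=
  ∑ i, ∑ j, ∑ p, ∑ q, G⁻¹ i p * G⁻¹ j q * gdot G (μ i j) (ν p q)

/-- The (Hilbert–Schmidt) inner product of endomorphisms induced by `G`. -/
noncomputable def einner (G : Matrix (Fin n) (Fin n) ℝ) (A B : Matrix (Fin n) (Fin n) ℝ) : ℝ :=
  ∑ i, ∑ j, G⁻¹ i j * gdot G (fun k => A k i) (fun k => B k j)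

/-- The inner product of bilinear forms induced by `G`. -/
noncomputable def binner (G : Matrix (Fin n) (Fin n) ℝ) (S T : Matrix (Fin n) (Fin n) ℝ) : ℝ :=
  ∑ i, ∑ j, ∑ p, ∑ q, G⁻¹ i p * G⁻¹ j q * S i j * T p q

/-- `|Ric_G|²`. -/
noncomputable def ric2 (c : Fin n → Fin n → Fin n → ℝ) (G : Matrix (Fin n) (Fin n) ℝ) : ℝ :=
  binner G (Ricm c G) (Ricm c G)

/-- The functional `W₊(G,τ) = τ R_G + τ² |Ric_G|²`. -/
noncomputable def Wplus (c : Fin n → Fin n → Fin n → ℝ) (G : Matrix (Fin n) (Fin n) ℝ) (τ : ℝ) : ℝ :=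
  τ * scalR c G + τ ^ 2 * ric2 c G

/-- Structure constants of the 3-dimensional Heisenberg Lie algebra: `[e₀,e₁] = e₂`, `e₂` central. -/
def heis : Fin 3 → Fin 3 → Fin 3 → ℝ := fun i j k =>
  if i = 0 ∧ j = 1 ∧ k = 2 then 1 else if i = 1 ∧ j = 0 ∧ k = 2 then -1 else 0

end RFN

open RFN Matrix

/-! Write `R_G = -(1/4) Σ G^{ip} G^{jq} G([e_i,e_j],[e_p,e_q])` and differentiate the three
occurrences of `G` separately, with `(G⁻¹)' = -G⁻¹ S G⁻¹`. By antisymmetry of the bracket the two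
terms coming from the inverse metric are equal, and together they are
`-⟨-(1/2) Σ_i G([·,e_i],[·,e_i]), S⟩`. The term coming from `G` itself is
`-⟨(1/4) Σ G([e_i,e_j],·) G([e_i,e_j],·), S⟩`: in the pairing with `S` the factors `G(·, e_a)` of
the second Ricci term cancel against the inverse metrics, since `G (G⁻¹ S G⁻¹) G = S`. -/

section MatrixCalculus

variable {ι : Type*} [Fintype ι]

theorem Matrix.hasDerivAt_mul_apply {A B : ℝ → Matrix ι ι ℝ} {A' B' : Matrix ι ι ℝ} {t : ℝ}
    (hA : ∀ i j, HasDerivAt (fun u => A u i j) (A' i j) t)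
    (hB : ∀ i j, HasDerivAt (fun u => B u i j) (B' i j) t) (i j : ι) :
    HasDerivAt (fun u => (A u * B u) i j) ((A' * B t + A t * B') i j) t := by
  simp only [Matrix.mul_apply, Matrix.add_apply, ← Finset.sum_add_distrib]
  exact HasDerivAt.fun_sum fun k _ => (hA i k).mul (hB k j)

variable [DecidableEq ι]

theorem Matrix.differentiableAt_det {M : ℝ → Matrix ι ι ℝ} {t : ℝ}
    (hM : ∀ i j, DifferentiableAt ℝ (fun u => M u i j) t) :
    DifferentiableAt ℝ (fun u => (M u).det) t := by
  simp only [Matrix.det_apply']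
  exact DifferentiableAt.fun_sum fun σ _ =>
    (DifferentiableAt.fun_finsetProd fun i _ => hM (σ i) i).const_mul _

theorem Matrix.differentiableAt_inv_apply {M : ℝ → Matrix ι ι ℝ} {t : ℝ}
    (hM : ∀ i j, DifferentiableAt ℝ (fun u => M u i j) t) (hdet : (M t).det ≠ 0) (i j : ι) :
    DifferentiableAt ℝ (fun u => (M u)⁻¹ i j) t := by
  have hadj : DifferentiableAt ℝ (fun u => (M u).adjugate i j) t := by
    simp only [Matrix.adjugate_apply]
    refine Matrix.differentiableAt_det fun a b => ?_
    by_cases hab : a = j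
    · simp [hab]
    · simpa [hab] using hM a b
  simp only [Matrix.inv_def, Ring.inverse_eq_inv, Matrix.smul_apply, smul_eq_mul]
  exact ((Matrix.differentiableAt_det hM).inv hdet).mul hadj

/-- Read off from differentiating `M⁻¹ * M = 1`, once `M⁻¹` is known to be differentiable. -/
theorem Matrix.hasDerivAt_inv_apply {M : ℝ → Matrix ι ι ℝ} {M' : Matrix ι ι ℝ} {t : ℝ}
    (hM : ∀ i j, HasDerivAt (fun u => M u i j) (M' i j) t) (hdet : ∀ u, IsUnit (M u).det)
    (i j : ι) :
    HasDerivAt (fun u => (M u)⁻¹ i j) ((-((M t)⁻¹ * M' * (M t)⁻¹)) i j) t := by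
  set D : Matrix ι ι ℝ := Matrix.of fun i j => deriv (fun u => (M u)⁻¹ i j) t
  have hD : ∀ i j, HasDerivAt (fun u => (M u)⁻¹ i j) (D i j) t := fun i j =>
    (Matrix.differentiableAt_inv_apply (fun a b => (hM a b).differentiableAt)
      (hdet t).ne_zero i j).hasDerivAt
  have hzero : D * M t + (M t)⁻¹ * M' = 0 := by
    ext i j
    have hconst : (fun u => ((M u)⁻¹ * M u) i j) = fun _ => (1 : Matrix ι ι ℝ) i j := by
      funext u
      rw [Matrix.nonsing_inv_mul _ (hdet u)]
    have h := Matrix.hasDerivAt_mul_apply hD hM i j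
    rw [hconst] at h
    exact h.unique (hasDerivAt_const t _)
  have hDeq : D = -((M t)⁻¹ * M' * (M t)⁻¹) := by
    calc D = (D * M t) * (M t)⁻¹ := by
          rw [Matrix.mul_assoc, Matrix.mul_nonsing_inv _ (hdet t), Matrix.mul_one]
      _ = -((M t)⁻¹ * M' * (M t)⁻¹) := by
          rw [eq_neg_of_add_eq_zero_left hzero, Matrix.neg_mul]
  exact hDeq ▸ hD i j

end MatrixCalculus

namespace RFN

variable {n : ℕ}

theorem gdot_eq_dotProduct (M : Matrix (Fin n) (Fin n) ℝ) (x y : Fin n → ℝ) :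
    gdot M x y = x ⬝ᵥ M *ᵥ y := by
  simp only [gdot, dotProduct, mulVec, Finset.mul_sum, mul_assoc]

theorem gdot_vecMul_vecMul (P M : Matrix (Fin n) (Fin n) ℝ) (x y : Fin n → ℝ) :
    gdot P (x ᵥ* M) (y ᵥ* M) = gdot (M * P * Mᵀ) x y := by
  simp only [gdot_eq_dotProduct, ← mulVec_mulVec, dotProduct_mulVec, mulVec_transpose]

theorem binner_eq_sum_mul_apply (G X S : Matrix (Fin n) (Fin n) ℝ) :
    binner G X S = ∑ a, ∑ b, (G⁻¹ * S * G⁻¹ᵀ) a b * X a b := by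
  simp only [binner, Matrix.mul_apply, Matrix.transpose_apply, Finset.sum_mul]
  refine Finset.sum_congr rfl fun a _ => Finset.sum_congr rfl fun b _ => ?_
  rw [Finset.sum_comm]
  exact Finset.sum_congr rfl fun q _ => Finset.sum_congr rfl fun p _ => by ring

/-- `scalR c G` with its three occurrences of the metric separated, so that the product rule can
act on each slot. -/
def contractBrackets (c : Fin n → Fin n → Fin n → ℝ) (H K B : Matrix (Fin n) (Fin n) ℝ) : ℝ :=
  ∑ i, ∑ j, ∑ p, ∑ q, H i p * K j q * gdot B (c i j) (c p q)

theorem scalR_eq_contractBrackets (c : Fin n → Fin n → Fin n → ℝ) (G : Matrix (Fin n) (Fin n) ℝ) :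
    scalR c G = -(1/4) * contractBrackets c G⁻¹ G⁻¹ G := rfl

theorem contractBrackets_neg_left (c : Fin n → Fin n → Fin n → ℝ)
    (H K B : Matrix (Fin n) (Fin n) ℝ) :
    contractBrackets c (-H) K B = -contractBrackets c H K B := by
  simp only [contractBrackets, Matrix.neg_apply, neg_mul, Finset.sum_neg_distrib]

theorem contractBrackets_comm {c : Fin n → Fin n → Fin n → ℝ} (hc : ∀ i j k, c i j k = -c j i k)
    (H K B : Matrix (Fin n) (Fin n) ℝ) :
    contractBrackets c H K B = contractBrackets c K H B := by
  have hswap : ∀ i j p q, gdot B (c j i) (c q p) = gdot B (c i j) (c p q) := fun i j p q => by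
    simp only [gdot, hc j i, hc q p, neg_mul, mul_neg, neg_neg]
  unfold contractBrackets
  rw [Finset.sum_comm]
  refine Finset.sum_congr rfl fun j _ => Finset.sum_congr rfl fun i _ => ?_
  rw [Finset.sum_comm]
  refine Finset.sum_congr rfl fun q _ => Finset.sum_congr rfl fun p _ => ?_
  rw [← hswap]
  ring

theorem contractBrackets_eq_sum (c : Fin n → Fin n → Fin n → ℝ)
    (H K B : Matrix (Fin n) (Fin n) ℝ) :
    contractBrackets c H K B = ∑ a, ∑ b, H a b * ∑ i, ∑ j, K i j * gdot B (c a i) (c b j) := by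
  simp only [contractBrackets, Finset.mul_sum]
  refine Finset.sum_congr rfl fun a _ => ?_
  rw [Finset.sum_comm]
  exact Finset.sum_congr rfl fun b _ => Finset.sum_congr rfl fun i _ =>
    Finset.sum_congr rfl fun j _ => by ring

theorem sum_mul_sum_vecMul_eq_contractBrackets (c : Fin n → Fin n → Fin n → ℝ)
    (H K M P : Matrix (Fin n) (Fin n) ℝ) :
    ∑ a, ∑ b, P a b * ∑ i, ∑ j, ∑ p, ∑ q, H i p * K j q * (c i j ᵥ* M) a * (c p q ᵥ* M) b
      = contractBrackets c H K (M * P * Mᵀ) := by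
  simp only [contractBrackets, ← gdot_vecMul_vecMul]
  simp only [gdot, Finset.mul_sum]
  rw [← Fintype.sum_prod_type', Finset.sum_comm]
  refine Finset.sum_congr rfl fun i _ => ?_
  rw [Finset.sum_comm]
  refine Finset.sum_congr rfl fun j _ => ?_
  rw [Finset.sum_comm]
  refine Finset.sum_congr rfl fun p _ => ?_
  rw [Finset.sum_comm]
  refine Finset.sum_congr rfl fun q _ => ?_
  rw [Fintype.sum_prod_type]
  exact Finset.sum_congr rfl fun a _ => Finset.sum_congr rfl fun b _ => by ring

theorem binner_ricm_eq (c : Fin n → Fin n → Fin n → ℝ) {G : Matrix (Fin n) (Fin n) ℝ}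
    (hG : G.IsSymm) (hdet : IsUnit G.det) (S : Matrix (Fin n) (Fin n) ℝ) :
    binner G (Ricm c G) S = -(1/2) * contractBrackets c (G⁻¹ * S * G⁻¹) G⁻¹ G
      + (1/4) * contractBrackets c G⁻¹ G⁻¹ S := by
  have hconj : G * (G⁻¹ * S * G⁻¹) * Gᵀ = S := by
    rw [hG.eq, Matrix.mul_assoc, Matrix.nonsing_inv_mul_cancel_right (h := hdet),
      Matrix.mul_nonsing_inv_cancel_left (h := hdet)]
  have hquartic := sum_mul_sum_vecMul_eq_contractBrackets c G⁻¹ G⁻¹ G (G⁻¹ * S * G⁻¹)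
  rw [hconj] at hquartic
  rw [binner_eq_sum_mul_apply, hG.inv.eq, contractBrackets_eq_sum, ← hquartic]
  simp only [Ricm, Matrix.of_apply, mul_add, Finset.sum_add_distrib,
    mul_left_comm _ (-(1/2) : ℝ), mul_left_comm _ (1/4 : ℝ), ← Finset.mul_sum]
  rfl

theorem hasDerivAt_gdot {B : ℝ → Matrix (Fin n) (Fin n) ℝ} {B' : Matrix (Fin n) (Fin n) ℝ} {t : ℝ}
    (hB : ∀ i j, HasDerivAt (fun u => B u i j) (B' i j) t) (x y : Fin n → ℝ) :
    HasDerivAt (fun u => gdot (B u) x y) (gdot B' x y) t :=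
  HasDerivAt.fun_sum fun i _ => HasDerivAt.fun_sum fun j _ =>
    ((hB i j).const_mul (x i)).mul_const (y j)

theorem hasDerivAt_contractBrackets (c : Fin n → Fin n → Fin n → ℝ)
    {H K B : ℝ → Matrix (Fin n) (Fin n) ℝ} {H' K' B' : Matrix (Fin n) (Fin n) ℝ} {t : ℝ}
    (hH : ∀ i j, HasDerivAt (fun u => H u i j) (H' i j) t)
    (hK : ∀ i j, HasDerivAt (fun u => K u i j) (K' i j) t)
    (hB : ∀ i j, HasDerivAt (fun u => B u i j) (B' i j) t) :
    HasDerivAt (fun u => contractBrackets c (H u) (K u) (B u))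
      (contractBrackets c H' (K t) (B t) + contractBrackets c (H t) K' (B t)
        + contractBrackets c (H t) (K t) B') t := by
  have h := HasDerivAt.fun_sum (u := Finset.univ) fun i _ =>
    HasDerivAt.fun_sum (u := Finset.univ) fun j _ =>
    HasDerivAt.fun_sum (u := Finset.univ) fun p _ =>
    HasDerivAt.fun_sum (u := Finset.univ) fun q _ =>
      ((hH i p).fun_mul (hK j q)).fun_mul (hasDerivAt_gdot hB (c i j) (c p q))
  refine h.congr_deriv ?_
  simp only [contractBrackets, ← Finset.sum_add_distrib]
  refine Finset.sum_congr rfl fun i _ => Finset.sum_congr rfl fun j _ =>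
    Finset.sum_congr rfl fun p _ => Finset.sum_congr rfl fun q _ => by ring

end RFN

theorem stmt4_general {n : ℕ} (c : Fin n → Fin n → Fin n → ℝ) (hc : IsLieSC c)
    (G : ℝ → Matrix (Fin n) (Fin n) ℝ) (hpd : ∀ t, (G t).PosDef)
    (hsym : ∀ t, (G t).IsSymm)
    (S : Matrix (Fin n) (Fin n) ℝ) (t₀ : ℝ)
    (hder : ∀ i j, HasDerivAt (fun u => G u i j) (S i j) t₀) :
    HasDerivAt (fun u => scalR c (G u)) (-(binner (G t₀) (Ricm c (G t₀)) S)) t₀ := by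
  have hdet : ∀ u, IsUnit (G u).det := fun u =>
    (Matrix.isUnit_iff_isUnit_det _).mp (hpd u).isUnit
  have hinv := Matrix.hasDerivAt_inv_apply hder hdet
  simp only [scalR_eq_contractBrackets]
  refine ((hasDerivAt_contractBrackets c hinv hinv hder).const_mul (-(1/4) : ℝ)).congr_deriv ?_
  rw [binner_ricm_eq c (hsym t₀) (hdet t₀), contractBrackets_comm hc.1 (G t₀)⁻¹,
    contractBrackets_neg_left]
  ring

theorem stmt4 {n : ℕ} (c : Fin n → Fin n → Fin n → ℝ) (hc : IsLieSC c)
    (G : ℝ → Matrix (Fin n) (Fin n) ℝ) (hpd : ∀ t, (G t).PosDef)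
    (hsym : ∀ t, (G t).IsSymm)
    (S : Matrix (Fin n) (Fin n) ℝ) (hS : S.IsSymm) (t₀ : ℝ)
    (hder : ∀ i j, HasDerivAt (fun u => G u i j) (S i j) t₀) :
    HasDerivAt (fun u => scalR c (G u)) (-(binner (G t₀) (Ricm c (G t₀)) S)) t₀ :=
  stmt4_general c hc G hpd hsym S t₀ hder
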